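/- Price characterization of the trace preorder (instance of Proposition 1): Let S = (P, Act, →) be a finite labeled transition system and p, q ∈ P. Then traces(p) ⊆ traces(q) if and only if no HML formula φ with expr(φ) ≤ (∞,1,0,0,0,0) distinguishes p from q. -/
import Mathlib


/-! ### Energies and energy updates -/

/-- (Finite) energies: vectors in `ℕ^N`. -/
abbrev Energy (N : ℕ) := Fin N → ℕ

/-- Extended energies: vectors in `(ℕ ∪ {∞})^N`. -/
abbrev EnergyE (N : ℕ) := Fin N → ℕ∞

/-- Embedding of energies into extended energies. -/
def Energy.toE {N : ℕ} (e : Energy N) : EnergyE N := fun k => (e k : ℕ∞)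

/-- A component of an energy update: `-1`, `0`, or `min_D`. -/
inductive UpdComp (N : ℕ) : Type where
  | dec : UpdComp N
  | zero : UpdComp N
  | minOf (D : Finset (Fin N)) : UpdComp N
deriving DecidableEq

/-- An energy update: a vector of update components, where a `min_D`
component at index `k` must satisfy `k ∈ D`. -/
structure EnergyUpdate (N : ℕ) : Type where
  comp : Fin N → UpdComp N
  valid : ∀ k D, comp k = UpdComp.minOf D → k ∈ D

open Classical in
/-- Applying an energy update to an extended energy: component `k` becomes
`e k - 1`, `e k`, or `min_{d ∈ D} e d`; the result is undefined (`none`) if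
some component would become negative. -/
noncomputable def applyUpdE {N : ℕ} (e : EnergyE N) (u : EnergyUpdate N) :
    Option (EnergyE N) :=
  if ∀ k, u.comp k = UpdComp.dec → e k ≠ 0 then
    some (fun k =>
      match u.comp k with
      | UpdComp.dec => e k - 1
      | UpdComp.zero => e k
      | UpdComp.minOf D => (insert k D).inf' (Finset.insert_nonempty k D) e)
  else none

open Classical in
/-- Applying an energy update to a (finite) energy. -/
noncomputable def applyUpdN {N : ℕ} (e : Energy N) (u : EnergyUpdate N) :
    Option (Energy N) :=
  if ∀ k, u.comp k = UpdComp.dec → e k ≠ 0 then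
    some (fun k =>
      match u.comp k with
      | UpdComp.dec => e k - 1
      | UpdComp.zero => e k
      | UpdComp.minOf D => (insert k D).inf' (Finset.insert_nonempty k D) e)
  else none

/-! ### Declining energy games -/

/-- A declining `N`-dimensional energy game: positions (partitioned into defender
positions and attacker positions), moves, and a weight function assigning an
energy update to each move. -/
structure EnergyGame (N : ℕ) where
  Pos : Type
  defender : Pos → Prop
  move : Pos → Pos → Prop
  weight : Pos → Pos → EnergyUpdate N

/-- The attacker wins from position `g` with (extended) initial energy budget `e`:
inductive (attractor) characterization of the existence of an attacker winning
strategy.  (The attacker wins exactly the finite plays that get stuck at a defender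
position without the energy having become negative, so the attacker has a winning
strategy iff they can force the play into a stuck defender position in finitely
many steps while keeping all energy levels defined.) -/
inductive AttackerWins {N : ℕ} (G : EnergyGame N) : G.Pos → EnergyE N → Prop where
  | attack {g g' : G.Pos} {e e' : EnergyE N} :
      ¬ G.defender g → G.move g g' →
      applyUpdE e (G.weight g g') = some e' →
      AttackerWins G g' e' → AttackerWins G g e
  | defend {g : G.Pos} {e : EnergyE N} :
      G.defender g →
      (∀ g', G.move g g' → (applyUpdE e (G.weight g g')).isSome) →
      (∀ g' e', G.move g g' → applyUpdE e (G.weight g g') = some e' →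
        AttackerWins G g' e') →
      AttackerWins G g e
/-! ### The spectroscopy energy game -/

/-- Lifting of transition steps to sets of processes:
`stepSet step Q a = {q' | ∃ q ∈ Q, q →a q'}`. -/
def stepSet {P : Type} {Act : Type} (step : P → Act → P → Prop) (Q : Set P) (a : Act) :
    Set P := {q' | ∃ q ∈ Q, step q a q'}

/-- The actions enabled initially for a process `p`: `I(p)`. -/
def enabledActs {P : Type} {Act : Type} (step : P → Act → P → Prop) (p : P) : Set Act :=
  {a | ∃ p', step p a p'}

/-- Positions of the spectroscopy energy game: attacker positions `[p,Q]_a`,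
attacker clause positions `[p,q]_a^∧`, and defender positions `(p,Q,Q*)_d`. -/
inductive SpecPos (P : Type) : Type where
  | att (p : P) (Q : Set P)
  | attConj (p q : P)
  | defp (p : P) (Q Qs : Set P)

/-- Update `(-1,0,0,0,0,0)` of observation moves. -/
def uObs : EnergyUpdate 6 :=
  ⟨![.dec, .zero, .zero, .zero, .zero, .zero], by decide⟩

/-- Update `(0,-1,0,0,0,0)` of conjunction challenges. -/
def uConj : EnergyUpdate 6 :=
  ⟨![.zero, .dec, .zero, .zero, .zero, .zero], by decide⟩

/-- Update `(min_{1,3},0,0,0,0,0)` of conjunction revivals. -/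
def uRevival : EnergyUpdate 6 :=
  ⟨![.minOf {0, 2}, .zero, .zero, .zero, .zero, .zero], by decide⟩

/-- Update `(0,0,0,min_{3,4},0,0)` of conjunction answers. -/
def uAnswer : EnergyUpdate 6 :=
  ⟨![.zero, .zero, .zero, .minOf {2, 3}, .zero, .zero], by decide⟩

/-- Update `(min_{1,4},0,0,0,0,0)` of positive decisions. -/
def uPos : EnergyUpdate 6 :=
  ⟨![.minOf {0, 3}, .zero, .zero, .zero, .zero, .zero], by decide⟩

/-- Update `(min_{1,5},0,0,0,0,-1)` of negative decisions. -/
def uNeg : EnergyUpdate 6 :=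
  ⟨![.minOf {0, 4}, .zero, .zero, .zero, .zero, .dec], by decide⟩

/-- The moves of the spectroscopy energy game `G△`. -/
inductive SpecMove {P : Type} {Act : Type} (step : P → Act → P → Prop) :
    SpecPos P → SpecPos P → Prop where
  | obs {p p' : P} {Q : Set P} {a : Act} :
      step p a p' →
      SpecMove step (.att p Q) (.att p' (stepSet step Q a))
  | conjChallenge {p : P} {Q Qs : Set P} :
      Qs ⊆ Q →
      SpecMove step (.att p Q) (.defp p (Q \ Qs) Qs)
  | conjRevival {p : P} {Q Qs : Set P} :
      Qs ≠ ∅ →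
      SpecMove step (.defp p Q Qs) (.att p Qs)
  | conjAnswer {p q : P} {Q Qs : Set P} :
      q ∈ Q →
      SpecMove step (.defp p Q Qs) (.attConj p q)
  | posDecision {p q : P} :
      SpecMove step (.attConj p q) (.att p {q})
  | negDecision {p q : P} :
      p ≠ q →
      SpecMove step (.attConj p q) (.att q {p})

/-- The moves of the clever spectroscopy game `G▲`: like `SpecMove`, with conjunction
challenges restricted to the four subsets
`∅`, `{q ∈ Q | I(q) ⊆ I(p)}`, `{q ∈ Q | I(p) ⊆ I(q)}`, `{q ∈ Q | I(p) = I(q)}`. -/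
inductive CleverMove {P : Type} {Act : Type} (step : P → Act → P → Prop) :
    SpecPos P → SpecPos P → Prop where
  | obs {p p' : P} {Q : Set P} {a : Act} :
      step p a p' →
      CleverMove step (.att p Q) (.att p' (stepSet step Q a))
  | conjChallenge {p : P} {Q Qs : Set P} :
      (Qs = ∅ ∨
       Qs = {q ∈ Q | enabledActs step q ⊆ enabledActs step p} ∨
       Qs = {q ∈ Q | enabledActs step p ⊆ enabledActs step q} ∨
       Qs = {q ∈ Q | enabledActs step p = enabledActs step q}) →
      CleverMove step (.att p Q) (.defp p (Q \ Qs) Qs)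
  | conjRevival {p : P} {Q Qs : Set P} :
      Qs ≠ ∅ →
      CleverMove step (.defp p Q Qs) (.att p Qs)
  | conjAnswer {p q : P} {Q Qs : Set P} :
      q ∈ Q →
      CleverMove step (.defp p Q Qs) (.attConj p q)
  | posDecision {p q : P} :
      CleverMove step (.attConj p q) (.att p {q})
  | negDecision {p q : P} :
      p ≠ q →
      CleverMove step (.attConj p q) (.att q {p})

open Classical in
/-- The weight function of the spectroscopy energy game (well-defined on all moves). -/
noncomputable def specWeight {P : Type} : SpecPos P → SpecPos P → EnergyUpdate 6
  | .att _ _, .att _ _ => uObs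
  | .att _ _, .defp _ _ _ => uConj
  | .defp _ _ _, .att _ _ => uRevival
  | .defp _ _ _, .attConj _ _ => uAnswer
  | .attConj p _, .att p' _ => if p = p' then uPos else uNeg
  | _, _ => uObs

/-- The spectroscopy energy game `G△` of a labeled transition system. -/
noncomputable def specGame {P : Type} {Act : Type} (step : P → Act → P → Prop) :
    EnergyGame 6 where
  Pos := SpecPos P
  defender g := ∃ p Q Qs, g = SpecPos.defp p Q Qs
  move := SpecMove step
  weight := specWeight

/-- The clever spectroscopy energy game `G▲` of a labeled transition system. -/
noncomputable def cleverGame {P : Type} {Act : Type} (step : P → Act → P → Prop) :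
    EnergyGame 6 where
  Pos := SpecPos P
  defender g := ∃ p Q Qs, g = SpecPos.defp p Q Qs
  move := CleverMove step
  weight := specWeight
/-! ### Hennessy–Milner logic -/

/-- Hennessy–Milner logic over actions `Act`: observations `⟨a⟩φ` and finite
conjunctions `⋀ {ψ_i}` whose clauses are positive (`poss`) or negated (`negs`)
formulas. -/
inductive HML (Act : Type) : Type where
  | obs (a : Act) (φ : HML Act)
  | conj (poss : List (HML Act)) (negs : List (HML Act))

/-- HML semantics: `HML.sat step φ p` means `p ⊨ φ`. -/
def HML.sat {P : Type} {Act : Type} (step : P → Act → P → Prop) :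
    HML Act → P → Prop
  | .obs a φ, p => ∃ p', step p a p' ∧ HML.sat step φ p'
  | .conj poss negs, p =>
      (∀ φ ∈ poss, HML.sat step φ p) ∧ (∀ φ ∈ negs, ¬ HML.sat step φ p)

/-- `φ` distinguishes `p` from `q`: `p ⊨ φ` and `q ⊭ φ`. -/
def distinguishes {P : Type} {Act : Type} (step : P → Act → P → Prop)
    (φ : HML Act) (p q : P) : Prop :=
  φ.sat step p ∧ ¬ φ.sat step q

/-- Maximum (supremum) of a list of naturals, `0` for the empty list. -/
def listMax (l : List ℕ) : ℕ := l.foldr max 0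

/-- Supremum of a list of naturals after removing one maximal element
(the "other positive clauses" in the pricing). -/
def supErase (l : List ℕ) : ℕ := listMax (l.erase (listMax l))

mutual
/-- The expressiveness price `expr : HML → ℕ^6` of a formula.
Components (0-indexed): 0 — modal depth; 1 — nesting depth of conjunctions;
2 — modal depth of the deepest positive clauses; 3 — modal depth of the other
positive clauses; 4 — modal depth of negative clauses; 5 — nesting depth of
negations. -/
def HML.expr {Act : Type} : HML Act → Energy 6
  | .obs _ φ => fun k => HML.expr φ k + (if k = 0 then 1 else 0)
  | .conj poss negs =>
      let pe := exprList poss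
      let ne := exprList negs
      -- prices of the clauses (a negated clause adds 1 to component 5)
      let clauseE : List (Energy 6) :=
        pe ++ ne.map (fun v => fun k => v k + (if k = 5 then 1 else 0))
      let base : Energy 6 := fun k =>
        if k = 1 then 1 + listMax (clauseE.map (fun v => v 1))
        else if k = 2 then listMax (pe.map (fun v => v 0))
        else if k = 3 then supErase (pe.map (fun v => v 0))
        else if k = 4 then listMax (ne.map (fun v => v 0))
        else 0
      fun k => max (base k) (listMax (clauseE.map (fun v => v k)))

/-- Prices of a list of formulas. -/
def exprList {Act : Type} : List (HML Act) → List (Energy 6)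
  | [] => []
  | φ :: l => HML.expr φ :: exprList l
end

/-- The expressiveness price as an extended energy. -/
def HML.exprE {Act : Type} (φ : HML Act) : EnergyE 6 := (HML.expr φ).toE

/-- Multi-step transitions along a word of actions. -/
inductive StepStar {P Act : Type} (step : P → Act → P → Prop) :
    P → List Act → P → Prop where
  | nil (p : P) : StepStar step p [] p
  | cons {p : P} {a : Act} {p' : P} {w : List Act} {p'' : P} :
      step p a p' → StepStar step p' w p'' → StepStar step p (a :: w) p''

/-- The traces of a process. -/
def traces {P Act : Type} (step : P → Act → P → Prop) (p : P) : Set (List Act) :=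
  {w | ∃ p', StepStar step p w p'}

/-! ### Auxiliary lemmas -/

/-- The trace formula `⟨a1⟩…⟨an⟩⋀∅`. -/
def traceFormula {Act : Type} (w : List Act) : HML Act :=
  w.foldr HML.obs (HML.conj [] [])

theorem exprList_eq {Act : Type} : ∀ l : List (HML Act), exprList l = l.map HML.expr
  | [] => rfl
  | φ :: l => by rw [exprList, exprList_eq l, List.map_cons]

theorem listMax_cons (x : ℕ) (l : List ℕ) : listMax (x :: l) = max x (listMax l) := rfl

theorem one_le_expr1 {Act : Type} : ∀ φ : HML Act, 1 ≤ HML.expr φ 1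
  | .obs a φ => by
      have := one_le_expr1 φ
      simp [HML.expr]
      omega
  | .conj poss negs => by
      simp only [HML.expr]
      refine le_trans ?_ (le_max_left _ _)
      rw [if_pos trivial]
      exact Nat.le_add_right 1 _

theorem eq_traceFormula {Act : Type} :
    ∀ φ : HML Act, HML.expr φ 1 ≤ 1 → ∃ w : List Act, φ = traceFormula w
  | .obs a φ, h => by
      have h' : HML.expr φ 1 ≤ 1 := by
        simp [HML.expr] at h; omega
      obtain ⟨w, rfl⟩ := eq_traceFormula φ h'
      exact ⟨a :: w, rfl⟩
  | .conj poss negs, h => by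
      refine ⟨[], ?_⟩
      simp only [HML.expr] at h
      rw [if_pos trivial] at h
      have hM : listMax (List.map (fun v => v 1)
          (exprList poss ++ List.map (fun v k => v k + if k = 5 then 1 else 0)
            (exprList negs))) = 0 := by
        have hb := le_trans (le_max_left _ _) h
        rw [Nat.add_comm] at hb
        exact Nat.le_zero.mp (Nat.succ_le_succ_iff.mp hb)
      cases poss with
      | cons φ₀ l =>
          exfalso
          rw [exprList_eq] at hM
          simp only [List.map_cons, List.cons_append, listMax_cons,
            Nat.max_eq_zero_iff] at hM
          have := one_le_expr1 φ₀
          rw [hM.1] at this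
          exact absurd this (by decide)
      | nil =>
        cases negs with
        | cons φ₀ l =>
            exfalso
            rw [exprList_eq, exprList_eq] at hM
            simp only [List.map_nil, List.map_cons, List.nil_append, listMax_cons,
              Nat.max_eq_zero_iff] at hM
            have := one_le_expr1 φ₀
            have h1 := hM.1
            simp at h1
            rw [h1] at this
            exact absurd this (by decide)
        | nil => rfl

theorem sat_traceFormula {P Act : Type} (step : P → Act → P → Prop) :
    ∀ (w : List Act) (r : P),
      HML.sat step (traceFormula w) r ↔ ∃ r', StepStar step r w r' := by
  intro w
  induction w with
  | nil =>
      intro r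
      rw [show traceFormula ([] : List Act) = HML.conj [] [] from rfl]
      simp only [HML.sat]
      constructor
      · intro _; exact ⟨r, StepStar.nil r⟩
      · intro _; refine ⟨?_, ?_⟩ <;> simp
  | cons a w ih =>
      intro r
      rw [show traceFormula (a :: w) = HML.obs a (traceFormula w) from rfl]
      simp only [HML.sat]
      constructor
      · rintro ⟨p', hstep, hsat⟩
        obtain ⟨r', hr'⟩ := (ih p').mp hsat
        exact ⟨r', StepStar.cons hstep hr'⟩
      · rintro ⟨r', hr'⟩
        cases hr' with
        | cons hstep hrest => exact ⟨_, hstep, (ih _).mpr ⟨r', hrest⟩⟩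

theorem expr_traceFormula {Act : Type} :
    ∀ (w : List Act) (k : Fin 6), HML.expr (traceFormula w) k =
      if k = 0 then w.length else if k = 1 then 1 else 0 := by
  intro w
  induction w with
  | nil =>
      intro k
      show HML.expr (HML.conj [] []) k = _
      simp only [HML.expr, exprList]
      fin_cases k <;> simp [listMax, supErase]
  | cons a w ih =>
      intro k
      show HML.expr (HML.obs a (traceFormula w)) k = _
      simp only [HML.expr, ih k]
      fin_cases k <;> simp

theorem exprE_traceFormula_le {Act : Type} (w : List Act) :
    HML.exprE (traceFormula w) ≤ (![⊤, 1, 0, 0, 0, 0] : EnergyE 6) := by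
  intro k
  simp only [HML.exprE, Energy.toE, expr_traceFormula]
  fin_cases k <;> simp

/-- **Price characterization of the trace preorder** (instance of Proposition 1):
`traces(p) ⊆ traces(q)` iff no formula of price `≤ (∞,1,0,0,0,0)` distinguishes
`p` from `q`. -/
theorem trace_price_characterization {P Act : Type} [Fintype P] [Fintype Act]
    (step : P → Act → P → Prop) (p q : P) :
    traces step p ⊆ traces step q ↔
      ¬ ∃ φ : HML Act,
        φ.exprE ≤ (![⊤, 1, 0, 0, 0, 0] : EnergyE 6) ∧ distinguishes step φ p q := by
  constructor
  · rintro hsub ⟨φ, hle, hp, hq⟩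
    have h1 : HML.expr φ 1 ≤ 1 := by
      have := hle 1
      simp only [HML.exprE, Energy.toE] at this
      have h1' : ((HML.expr φ 1 : ℕ) : ℕ∞) ≤ ((1 : ℕ) : ℕ∞) := by
        simpa using this
      exact_mod_cast h1'
    obtain ⟨w, rfl⟩ := eq_traceFormula φ h1
    have hwp : w ∈ traces step p := (sat_traceFormula step w p).mp hp
    exact hq ((sat_traceFormula step w q).mpr (hsub hwp))
  · intro h w hw
    by_contra hq
    exact h ⟨traceFormula w, exprE_traceFormula_le w,
      (sat_traceFormula step w p).mpr hw,
      fun hs => hq ((sat_traceFormula step w q).mp hs)⟩
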